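/- arXiv:1305.2375 — 4 statements merged into one kernel-verified Lean document; each statement's English description precedes it below -/
import Mathlib

section
/- For every function w in H^1(0,N) (continuous with square-integrable derivative) and all positive reals α and N, one has M · ∫₀^N w(t)² dt ≤ α·w(0)² + ∫₀^N w'(t)² dt, where M = π²α/(N(4αN+π²)). -/
/-!
If `ρ` satisfies the Riccati inequality `ρ' + ρ² + M ≤ 0`, then completing the square gives
`(-ρ w²)' = -ρ' w² - 2 ρ w w' ≥ M w² - w'²`, and integrating over `[0, N]` yields
`M ∫ w² ≤ ρ(0) w(0)² - ρ(N) w(N)² + ∫ w'²`.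
The solution `ρ(t) = √M tan (√M (N - t))` vanishes at `N`, and `ρ(0) ≤ α` is the Becker–Stark
inequality `(π² - 4x²) tan x ≤ π² x` at `x = √M N`: the constant `M` is exactly the one for which
this bound gives `ρ(0) = α`, i.e. `M N (4 α N + π²) = π² α`.
The Becker–Stark inequality itself holds because `f(y) = π² y cos y - (π² - 4y²) sin y` vanishes at
`0` and `π / 2` and has derivative `y g(y)` with `g` concave and `g(0) = 0`, so `f` first
increases and then decreases.
-/

open MeasureTheory Real Set

theorem nonneg_of_hasDerivAt_mul_of_concaveOn {f g : ℝ → ℝ} {c x : ℝ}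
    (hf : ∀ y ∈ Icc 0 c, HasDerivAt f (y * g y) y) (hg : ConcaveOn ℝ (Icc 0 c) g) (hg0 : g 0 = 0)
    (hf0 : 0 ≤ f 0) (hfc : 0 ≤ f c) (hx : x ∈ Icc 0 c) : 0 ≤ f x := by
  have hcont : ContinuousOn f (Icc 0 c) := fun y hy => (hf y hy).continuousAt.continuousWithinAt
  have h0 : (0 : ℝ) ∈ Icc 0 c := left_mem_Icc.2 (hx.1.trans hx.2)
  by_cases hgx : 0 ≤ g x
  · have hmono : MonotoneOn f (Icc 0 x) := by
      refine monotoneOn_of_hasDerivWithinAt_nonneg (f' := fun y => y * g y) (convex_Icc 0 x)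
        (hcont.mono (Icc_subset_Icc_right hx.2)) (fun y hy => ?_) (fun y hy => ?_) <;>
        rw [interior_Icc] at hy
      · exact (hf y ⟨hy.1.le, hy.2.le.trans hx.2⟩).hasDerivWithinAt
      · have hgy : min (g 0) (g x) ≤ g y :=
          hg.ge_on_segment h0 hx (by rw [segment_eq_Icc hx.1]; exact Ioo_subset_Icc_self hy)
        rw [hg0, min_eq_left hgx] at hgy
        exact mul_nonneg hy.1.le hgy
    exact hf0.trans (hmono (left_mem_Icc.2 hx.1) (right_mem_Icc.2 hx.1) hx.1)
  · have hanti : AntitoneOn f (Icc x c) := by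
      refine antitoneOn_of_hasDerivWithinAt_nonpos (f' := fun y => y * g y) (convex_Icc x c)
        (hcont.mono (Icc_subset_Icc_left hx.1)) (fun y hy => ?_) (fun y hy => ?_) <;>
        rw [interior_Icc] at hy
      · exact (hf y ⟨hx.1.trans hy.1.le, hy.2.le⟩).hasDerivWithinAt
      · refine mul_nonpos_of_nonneg_of_nonpos (hx.1.trans hy.1.le) (not_lt.1 fun hgy => hgx ?_)
        have hgx' : min (g 0) (g y) ≤ g x :=
          hg.ge_on_segment h0 ⟨hx.1.trans hy.1.le, hy.2.le⟩
            (by rw [segment_eq_Icc (hx.1.trans hy.1.le)]; exact ⟨hx.1, hy.1.le⟩)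
        rwa [hg0, min_eq_left hgy.le] at hgx'
    exact hfc.trans (hanti (left_mem_Icc.2 hx.2) (right_mem_Icc.2 hx.2) hx.2)

theorem concaveOn_mul_cos_sub_mul_sin :
    ConcaveOn ℝ (Icc 0 (π / 2)) (fun y => 4 * y * cos y - (π ^ 2 - 8) * sin y) := by
  have hg' : ∀ y, HasDerivAt (fun y => 4 * y * cos y - (π ^ 2 - 8) * sin y)
      ((12 - π ^ 2) * cos y - 4 * y * sin y) y := fun y =>
    ((((hasDerivAt_id y).const_mul 4).mul (hasDerivAt_cos y)).sub
      ((hasDerivAt_sin y).const_mul _)).congr_deriv (by simp only [id]; ring)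
  have hg'' : ∀ y, HasDerivAt (fun y => (12 - π ^ 2) * cos y - 4 * y * sin y)
      (-((16 - π ^ 2) * sin y + 4 * y * cos y)) y := fun y =>
    (((hasDerivAt_cos y).const_mul _).sub
      (((hasDerivAt_id y).const_mul 4).mul (hasDerivAt_sin y))).congr_deriv (by simp only [id]; ring)
  refine concaveOn_of_hasDerivWithinAt2_nonpos (convex_Icc _ _)
    (fun y _ => (hg' y).continuousAt.continuousWithinAt) (fun y _ => (hg' y).hasDerivWithinAt)
    (fun y _ => (hg'' y).hasDerivWithinAt) fun y hy => ?_
  rw [interior_Icc] at hy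
  have hsin : 0 ≤ sin y := sin_nonneg_of_nonneg_of_le_pi hy.1.le (by linarith [hy.2, pi_pos])
  have hcos : 0 ≤ cos y := cos_nonneg_of_mem_Icc ⟨by linarith [hy.1, pi_pos], hy.2.le⟩
  have hπ : π ^ 2 < 16 := by nlinarith [pi_lt_four, pi_pos]
  nlinarith [hy.1]

theorem becker_stark {x : ℝ} (hx0 : 0 ≤ x) (hx : x < π / 2) :
    (π ^ 2 - 4 * x ^ 2) * tan x ≤ π ^ 2 * x := by
  have hf : ∀ y, HasDerivAt (fun y => π ^ 2 * y * cos y - (π ^ 2 - 4 * y ^ 2) * sin y)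
      (y * (4 * y * cos y - (π ^ 2 - 8) * sin y)) y := fun y =>
    ((((hasDerivAt_id y).const_mul _).mul (hasDerivAt_cos y)).sub
      ((((hasDerivAt_pow 2 y).const_mul 4).const_sub _).mul (hasDerivAt_sin y))).congr_deriv
      (by simp only [id]; ring)
  have key := nonneg_of_hasDerivAt_mul_of_concaveOn (fun y _ => hf y)
    concaveOn_mul_cos_sub_mul_sin (by simp) (by simp)
    (by rw [cos_pi_div_two, sin_pi_div_two]; ring_nf; exact le_rfl) ⟨hx0, hx.le⟩
  have hcos : 0 < cos x := cos_pos_of_mem_Ioo ⟨by linarith [pi_pos], hx⟩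
  rw [tan_eq_sin_div_cos, mul_div_assoc', div_le_iff₀ hcos]
  linarith

theorem hasDerivAt_mul_tan_mul_sub {s c t : ℝ} (h : cos (s * (c - t)) ≠ 0) :
    HasDerivAt (fun t => s * tan (s * (c - t))) (-(s ^ 2 + (s * tan (s * (c - t))) ^ 2)) t := by
  refine (((hasDerivAt_tan h).comp t (((hasDerivAt_id t).const_sub c).const_mul s)).const_mul s
    ).congr_deriv ?_
  rw [one_div, ← inv_one_add_tan_sq h, inv_inv]
  ring

theorem integral_sq_le_of_riccati {w w' ρ ρ' : ℝ → ℝ} {a b M : ℝ} (hab : a ≤ b)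
    (hw : ∀ t ∈ Icc a b, HasDerivAt w (w' t) t) (hρ : ∀ t ∈ Icc a b, HasDerivAt ρ (ρ' t) t)
    (hric : ∀ t ∈ Ioo a b, ρ' t + ρ t ^ 2 + M ≤ 0)
    (hw2 : IntervalIntegrable (fun t => w t ^ 2) volume a b)
    (hw'2 : IntervalIntegrable (fun t => w' t ^ 2) volume a b) :
    M * ∫ t in a..b, w t ^ 2 ≤ ρ a * w a ^ 2 - ρ b * w b ^ 2 + ∫ t in a..b, w' t ^ 2 := by
  have hG : ∀ t ∈ Icc a b, HasDerivAt (fun t => -(ρ t * w t ^ 2))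
      (-(ρ' t * w t ^ 2 + ρ t * (2 * w t * w' t))) t := fun t ht =>
    ((hρ t ht).mul ((hw t ht).pow 2)).neg.congr_deriv
      (by simp only [Pi.pow_apply, Nat.cast_ofNat]; ring)
  have hint := (hw2.const_mul M).sub hw'2
  -- only the lower bound `M w² - w'²` has to be integrable, not the derivative itself
  have key := intervalIntegral.integral_le_sub_of_hasDeriv_right_of_le hab
    (fun t ht => (hG t ht).continuousAt.continuousWithinAt)
    (fun t ht => (hG t (Ioo_subset_Icc_self ht)).hasDerivWithinAt)
    ((intervalIntegrable_iff_integrableOn_Icc_of_le hab).1 hint) fun t ht => by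
      nlinarith [mul_le_mul_of_nonneg_right (hric t ht) (sq_nonneg (w t)),
        sq_nonneg (w' t - ρ t * w t)]
  rw [intervalIntegral.integral_sub (hw2.const_mul M) hw'2,
    intervalIntegral.integral_const_mul] at key
  linarith

theorem sqrt_mul_lt_pi_div_two {α N M : ℝ} (hα : 0 < α) (hN : 0 < N) (hM0 : 0 < M)
    (hM : M * N * (4 * α * N + π ^ 2) = π ^ 2 * α) : √M * N < π / 2 := by
  refine (pow_lt_pow_iff_left₀ (by positivity) (by positivity) two_ne_zero).1 ?_
  rw [mul_pow, sq_sqrt hM0.le]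
  nlinarith [mul_pos (mul_pos hM0 hN) (pow_pos pi_pos 2)]

theorem sqrt_mul_tan_sqrt_mul_le {α N M : ℝ} (hα : 0 < α) (hN : 0 < N) (hM0 : 0 < M)
    (hM : M * N * (4 * α * N + π ^ 2) = π ^ 2 * α) : √M * tan (√M * N) ≤ α := by
  have hb := sqrt_mul_lt_pi_div_two hα hN hM0 hM
  have hpos : 0 < π ^ 2 - 4 * (√M * N) ^ 2 := by
    nlinarith [mul_self_lt_mul_self (by positivity) hb]
  refine le_of_mul_le_mul_left ?_ hpos
  calc (π ^ 2 - 4 * (√M * N) ^ 2) * (√M * tan (√M * N))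
      = √M * ((π ^ 2 - 4 * (√M * N) ^ 2) * tan (√M * N)) := by ring
    _ ≤ √M * (π ^ 2 * (√M * N)) :=
      mul_le_mul_of_nonneg_left (becker_stark (by positivity) hb) (sqrt_nonneg M)
    _ = (π ^ 2 - 4 * (√M * N) ^ 2) * α := by
      linear_combination (π ^ 2 * N + 4 * α * N ^ 2) * sq_sqrt hM0.le + hM

theorem trace_inequality_interval
    (w w' : ℝ → ℝ) (α N : ℝ) (hα : 0 < α) (hN : 0 < N)
    (hderiv : ∀ t ∈ Set.Icc (0:ℝ) N, HasDerivAt w (w' t) t)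
    (hw2 : IntervalIntegrable (fun t => (w t)^2) volume 0 N)
    (hw'2 : IntervalIntegrable (fun t => (w' t)^2) volume 0 N) :
    (π^2 * α / (N * (4 * α * N + π^2))) * ∫ t in (0:ℝ)..N, (w t)^2
      ≤ α * (w 0)^2 + ∫ t in (0:ℝ)..N, (w' t)^2 := by
  set M := π ^ 2 * α / (N * (4 * α * N + π ^ 2))
  have hM0 : 0 < M := by positivity
  have hM : M * N * (4 * α * N + π ^ 2) = π ^ 2 * α := by simp only [M]; field_simp
  have hb := sqrt_mul_lt_pi_div_two hα hN hM0 hM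
  have hcos : ∀ t ∈ Icc 0 N, cos (√M * (N - t)) ≠ 0 := fun t ht =>
    (cos_pos_of_mem_Ioo ⟨by nlinarith [sqrt_nonneg M, pi_pos, ht.2],
      by nlinarith [sqrt_nonneg M, ht.1]⟩).ne'
  have key := integral_sq_le_of_riccati (M := M) hN.le hderiv
    (fun t ht => hasDerivAt_mul_tan_mul_sub (hcos t ht))
    (fun t _ => by rw [sq_sqrt hM0.le]; linarith) hw2 hw'2
  simp only [sub_self, mul_zero, tan_zero, zero_mul, sub_zero] at key
  linarith [mul_le_mul_of_nonneg_right (sqrt_mul_tan_sqrt_mul_le hα hN hM0 hM) (sq_nonneg (w 0))]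
end

section
/- For every function w : [0,∞) → ℝ with w ∈ H^1_loc, w' ∈ L²(0,∞), and w(t) → 0 suitably (w ∈ H¹(0,∞)), and every ν > 0, one has (ν/2)·w(0)² + ∫₀^∞ w'(t)² dt ≥ (1/4)·∫₀^∞ ν²/(νt+1)² · w(t)² dt. -/
/-!
The weight `φ t = ν / (2 (ν t + 1))` solves the Riccati equation `φ' = -2 φ²`. Expanding
`0 ≤ ∫ (w' - φ w)²` and writing the cross term as `2 φ w w' = (φ w²)' - φ' w²` gives
`∫ w'² + φ(0) w(0)² ≥ ∫ (-φ' - φ²) w² = ∫ φ² w²`: the boundary term `φ w²` at infinity drops out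
because it is nonnegative and, its derivative being integrable, has a limit.
-/

open MeasureTheory Real Filter Set

theorem aestronglyMeasurable_restrict_of_hasDerivAt {F : Type*} [NormedAddCommGroup F]
    [NormedSpace ℝ F] [CompleteSpace F] {f f' : ℝ → F} {s : Set ℝ} (μ : Measure ℝ)
    (hs : MeasurableSet s) (hf : ∀ x ∈ s, HasDerivAt f (f' x) x) :
    AEStronglyMeasurable f' (μ.restrict s) :=
  (aestronglyMeasurable_deriv f _).congr <|
    ae_restrict_of_forall_mem hs fun x hx => (hf x hx).deriv

theorem integrable_mul_of_integrable_sq {α : Type*} [MeasurableSpace α] {μ : Measure α}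
    {f g : α → ℝ} (hf : AEStronglyMeasurable f μ) (hg : AEStronglyMeasurable g μ)
    (hf2 : Integrable (fun x => f x ^ 2) μ) (hg2 : Integrable (fun x => g x ^ 2) μ) :
    Integrable (fun x => f x * g x) μ :=
  ((memLp_two_iff_integrable_sq hf).2 hf2).integrable_mul
    ((memLp_two_iff_integrable_sq hg).2 hg2)

theorem neg_le_integral_Ioi_of_hasDerivAt_of_nonneg {g g' : ℝ → ℝ} {a : ℝ}
    (hderiv : ∀ x ∈ Ici a, HasDerivAt g (g' x) x) (hint : IntegrableOn g' (Ioi a))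
    (hg : ∀ x ∈ Ici a, 0 ≤ g x) :
    -g a ≤ ∫ x in Ioi a, g' x := by
  have hlim := tendsto_limUnder_of_hasDerivAt_of_integrableOn_Ioi
    (fun x hx => hderiv x (mem_Ici_of_Ioi hx)) hint
  have hlim_nonneg : 0 ≤ limUnder atTop g :=
    ge_of_tendsto hlim ((eventually_ge_atTop a).mono hg)
  rw [integral_Ioi_of_hasDerivAt_of_tendsto' hderiv hint hlim]
  linarith

theorem integral_Ioi_riccati_mul_sq_le {φ φ' w w' : ℝ → ℝ} {a C D : ℝ}
    (hφ : ∀ t ∈ Ici a, HasDerivAt φ (φ' t) t) (hφ_nonneg : ∀ t ∈ Ici a, 0 ≤ φ t)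
    (hφ_le : ∀ t ∈ Ioi a, φ t ≤ C) (hφ'_bdd : ∀ t ∈ Ioi a, |φ' t| ≤ D)
    (hw : ∀ t ∈ Ici a, HasDerivAt w (w' t) t)
    (hw2 : IntegrableOn (fun t => w t ^ 2) (Ioi a))
    (hw'2 : IntegrableOn (fun t => w' t ^ 2) (Ioi a)) :
    ∫ t in Ioi a, (-φ' t - φ t ^ 2) * w t ^ 2 ≤ φ a * w a ^ 2 + ∫ t in Ioi a, w' t ^ 2 := by
  have hIoi : ∀ {P : ℝ → Prop}, (∀ t ∈ Ici a, P t) → ∀ t ∈ Ioi a, P t :=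
    fun h t ht => h t (mem_Ici_of_Ioi ht)
  have hφm : AEStronglyMeasurable φ (volume.restrict (Ioi a)) :=
    (HasDerivAt.continuousOn (hIoi hφ)).aestronglyMeasurable measurableSet_Ioi
  have hwm : AEStronglyMeasurable w (volume.restrict (Ioi a)) :=
    (HasDerivAt.continuousOn (hIoi hw)).aestronglyMeasurable measurableSet_Ioi
  have hφ'm := aestronglyMeasurable_restrict_of_hasDerivAt volume measurableSet_Ioi (hIoi hφ)
  have hw'm := aestronglyMeasurable_restrict_of_hasDerivAt volume measurableSet_Ioi (hIoi hw)
  have hφ_bdd : ∀ᵐ t ∂volume.restrict (Ioi a), ‖φ t‖ ≤ C :=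
    ae_restrict_of_forall_mem measurableSet_Ioi fun t ht => by
      rw [norm_eq_abs, abs_of_nonneg (hIoi hφ_nonneg t ht)]; exact hφ_le t ht
  have hφ'_bdd : ∀ᵐ t ∂volume.restrict (Ioi a), ‖φ' t‖ ≤ D :=
    ae_restrict_of_forall_mem measurableSet_Ioi hφ'_bdd
  have hφw2 : IntegrableOn (fun t => φ t * w t ^ 2) (Ioi a) := hw2.bdd_mul hφm hφ_bdd
  have hφ'w2 : IntegrableOn (fun t => φ' t * w t ^ 2) (Ioi a) := hw2.bdd_mul hφ'm hφ'_bdd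
  have hφww' : IntegrableOn (fun t => φ t * (2 * (w t * w' t))) (Ioi a) :=
    ((integrable_mul_of_integrable_sq hwm hw'm hw2 hw'2).const_mul 2).bdd_mul hφm hφ_bdd
  have hlhs : IntegrableOn (fun t => (-φ' t - φ t ^ 2) * w t ^ 2) (Ioi a) :=
    (hφ'w2.neg.sub (hφw2.bdd_mul hφm hφ_bdd)).congr
      (Eventually.of_forall fun t => by simp only [Pi.sub_apply, Pi.neg_apply]; ring)
  have hg'int : IntegrableOn (fun t => φ' t * w t ^ 2 + φ t * (2 * (w t * w' t))) (Ioi a) :=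
    hφ'w2.add hφww'
  have hboundary := neg_le_integral_Ioi_of_hasDerivAt_of_nonneg (g := fun t => φ t * w t ^ 2)
    (fun t ht => ((hφ t ht).mul ((hw t ht).fun_pow 2)).congr_deriv (by ring)) hg'int
    (fun t ht => mul_nonneg (hφ_nonneg t ht) (sq_nonneg _))
  calc ∫ t in Ioi a, (-φ' t - φ t ^ 2) * w t ^ 2
      ≤ ∫ t in Ioi a, (w' t ^ 2 - (φ' t * w t ^ 2 + φ t * (2 * (w t * w' t)))) :=
        setIntegral_mono hlhs (hw'2.sub hg'int) fun t => by
          nlinarith [sq_nonneg (w' t - φ t * w t)]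
    _ = (∫ t in Ioi a, w' t ^ 2)
          - ∫ t in Ioi a, (φ' t * w t ^ 2 + φ t * (2 * (w t * w' t))) :=
        integral_sub hw'2 hg'int
    _ ≤ φ a * w a ^ 2 + ∫ t in Ioi a, w' t ^ 2 := by linarith

theorem hasDerivAt_div_two_mul_mul_add_one {ν t : ℝ} (ht : ν * t + 1 ≠ 0) :
    HasDerivAt (fun s => ν / (2 * (ν * s + 1))) (-(2 * (ν / (2 * (ν * t + 1))) ^ 2)) t := by
  have hlin : HasDerivAt (fun s => 2 * (ν * s + 1)) (2 * ν) t := by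
    simpa using (((hasDerivAt_id t).const_mul ν).add_const 1).const_mul 2
  refine ((hasDerivAt_const t ν).div hlin (by positivity)).congr_deriv ?_
  field_simp
  ring

theorem hardy_type_halfline
    (w w' : ℝ → ℝ) (ν : ℝ) (hν : 0 < ν)
    (hderiv : ∀ t ∈ Set.Ici (0:ℝ), HasDerivAt w (w' t) t)
    (hw2 : IntegrableOn (fun t => (w t)^2) (Set.Ioi (0:ℝ)) volume)
    (hw'2 : IntegrableOn (fun t => (w' t)^2) (Set.Ioi (0:ℝ)) volume) :
    (ν / 2) * (w 0)^2 + ∫ t in Set.Ioi (0:ℝ), (w' t)^2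
      ≥ (1/4) * ∫ t in Set.Ioi (0:ℝ), ν^2 / (ν * t + 1)^2 * (w t)^2 := by
  set φ : ℝ → ℝ := fun t => ν / (2 * (ν * t + 1))
  have hpos : ∀ t ∈ Ici (0:ℝ), 0 < ν * t + 1 := fun t ht => by nlinarith [mem_Ici.1 ht]
  have hφ_nonneg : ∀ t ∈ Ici (0:ℝ), 0 ≤ φ t := fun t ht => by have := hpos t ht; positivity
  have hφ_le : ∀ t ∈ Ioi (0:ℝ), φ t ≤ ν / 2 := fun t ht =>
    div_le_div_of_nonneg_left hν.le two_pos (by nlinarith [mem_Ioi.1 ht])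
  have hφ'_bdd : ∀ t ∈ Ioi (0:ℝ), |-(2 * φ t ^ 2)| ≤ 2 * (ν / 2) ^ 2 := fun t ht => by
    have := hφ_nonneg t (mem_Ici_of_Ioi ht)
    rw [abs_neg, abs_of_nonneg (by positivity)]
    gcongr
    exact hφ_le t ht
  have key := integral_Ioi_riccati_mul_sq_le
    (fun t ht => hasDerivAt_div_two_mul_mul_add_one (hpos t ht).ne') hφ_nonneg hφ_le hφ'_bdd
    hderiv hw2 hw'2
  have hweight : EqOn (fun t => (-(-(2 * φ t ^ 2)) - φ t ^ 2) * w t ^ 2)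
      (fun t => 1 / 4 * (ν ^ 2 / (ν * t + 1) ^ 2 * w t ^ 2)) (Ioi 0) := fun t ht => by
    have := hpos t (mem_Ici_of_Ioi ht)
    simp only [φ]
    field_simp
    ring
  rw [setIntegral_congr_fun measurableSet_Ioi hweight, integral_const_mul] at key
  simpa [φ] using key
end

section
/- Let S be a smooth closed curve in the upper half-plane {x₂ > 0}, contained in {|x₁| < L, h < x₂ < H} with 0 < h ≤ H, and with outward unit normal n = (n₁,n₂). Fix ε ∈ (0,h]. Assume Condition 1: x₁n₁(x) ≤ 0 for all x ∈ S, and Condition 2: x₁(x₁² − (x₂−ε)²)n₁(x) + 2x₁²(x₂−ε)n₂(x) ≥ 0 for all x ∈ S. Then for every x ∈ S with x₂ > h (equivalently, at any point where x₂ ≥ ε and x ≠ 0) one has −x₁n₁(x) ≤ (H/ε)·W(x)·n(x), where W(x) = (x₁(x₁²−x₂²)/(x₁²+x₂²), 2x₁²x₂/(x₁²+x₂²)). -/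
/-!
Write `P(x) = ‖x‖² W(x)·n`, so that Condition 2 says `P(x₁, x₂ - ε) ≥ 0`: the field recentred at
`(0, ε)` points outward. With `s = x₂ - ε`, the polynomial identity
`s P(x₁, x₂) - x₂ P(x₁, s) = ε (-x₁n₁) (s x₂ + x₁²)` turns this into
`s P(x) ≥ ε (-x₁n₁) (s x₂ + x₁²)`, and `s, x₂ ≤ H` gives `H (s x₂ + x₁²) ≥ s ‖x‖²`.
-/

/-- `‖x‖² (W(x) · n)` for Maz'ya's field `W` at `x = (x₁, x₂)` and `n = (n₁, n₂)`. -/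
def mazyaFlux {R : Type*} [CommRing R] (x₁ x₂ n₁ n₂ : R) : R :=
  x₁ * (x₁ ^ 2 - x₂ ^ 2) * n₁ + 2 * x₁ ^ 2 * x₂ * n₂

theorem mazyaField_dot_eq_mazyaFlux_div {K : Type*} [Field K] (x₁ x₂ n₁ n₂ : K) :
    (x₁ * (x₁ ^ 2 - x₂ ^ 2) / (x₁ ^ 2 + x₂ ^ 2)) * n₁ + (2 * x₁ ^ 2 * x₂ / (x₁ ^ 2 + x₂ ^ 2)) * n₂
      = mazyaFlux x₁ x₂ n₁ n₂ / (x₁ ^ 2 + x₂ ^ 2) := by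
  unfold mazyaFlux
  ring

theorem mul_mazyaFlux_sub_mul_mazyaFlux {R : Type*} [CommRing R] (x₁ x₂ s n₁ n₂ : R) :
    s * mazyaFlux x₁ x₂ n₁ n₂ - x₂ * mazyaFlux x₁ s n₁ n₂
      = (x₂ - s) * -(x₁ * n₁) * (s * x₂ + x₁ ^ 2) := by
  unfold mazyaFlux
  ring

theorem mul_le_mazyaFlux_of_shift {x₁ x₂ s n₁ n₂ H : ℝ} (hs : 0 < s) (hsx₂ : s ≤ x₂)
    (hx₂H : x₂ ≤ H) (hn₁ : x₁ * n₁ ≤ 0) (hshift : 0 ≤ mazyaFlux x₁ s n₁ n₂) :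
    (x₂ - s) * -(x₁ * n₁) * (x₁ ^ 2 + x₂ ^ 2) ≤ H * mazyaFlux x₁ x₂ n₁ n₂ := by
  have hm : 0 ≤ (x₂ - s) * -(x₁ * n₁) := mul_nonneg (by linarith) (by linarith)
  have hweight : s * (x₁ ^ 2 + x₂ ^ 2) ≤ H * (s * x₂ + x₁ ^ 2) := by
    nlinarith [mul_nonneg (mul_nonneg hs.le (sub_nonneg.2 hx₂H)) (hs.le.trans hsx₂),
      mul_nonneg (sub_nonneg.2 (hsx₂.trans hx₂H)) (sq_nonneg x₁)]
  have hflux : (x₂ - s) * -(x₁ * n₁) * (s * x₂ + x₁ ^ 2) ≤ s * mazyaFlux x₁ x₂ n₁ n₂ := by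
    nlinarith [mul_mazyaFlux_sub_mul_mazyaFlux x₁ x₂ s n₁ n₂, mul_nonneg (hs.le.trans hsx₂) hshift]
  refine le_of_mul_le_mul_left ?_ hs
  calc s * ((x₂ - s) * -(x₁ * n₁) * (x₁ ^ 2 + x₂ ^ 2))
      = (x₂ - s) * -(x₁ * n₁) * (s * (x₁ ^ 2 + x₂ ^ 2)) := by ring
    _ ≤ (x₂ - s) * -(x₁ * n₁) * (H * (s * x₂ + x₁ ^ 2)) := mul_le_mul_of_nonneg_left hweight hm
    _ = H * ((x₂ - s) * -(x₁ * n₁) * (s * x₂ + x₁ ^ 2)) := by ring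
    _ ≤ H * (s * mazyaFlux x₁ x₂ n₁ n₂) := mul_le_mul_of_nonneg_left hflux (by linarith)
    _ = s * (H * mazyaFlux x₁ x₂ n₁ n₂) := by ring

theorem mazya_field_lower_bound_general
    (x₁ x₂ n₁ n₂ ε h H : ℝ)
    (hx₂ : h < x₂) (hx₂H : x₂ ≤ H)
    (hε : 0 < ε) (hεh : ε ≤ h)
    (hcond1 : x₁ * n₁ ≤ 0)
    (hcond2 : x₁ * (x₁^2 - (x₂ - ε)^2) * n₁ + 2 * x₁^2 * (x₂ - ε) * n₂ ≥ 0) :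
    -(x₁ * n₁) ≤ (H / ε) *
      ((x₁ * (x₁^2 - x₂^2) / (x₁^2 + x₂^2)) * n₁ + (2 * x₁^2 * x₂ / (x₁^2 + x₂^2)) * n₂) := by
  have hr : 0 < x₁ ^ 2 + x₂ ^ 2 := by nlinarith [sq_nonneg x₁]
  have key := mul_le_mazyaFlux_of_shift (x₁ := x₁) (n₁ := n₁) (n₂ := n₂) (s := x₂ - ε)
    (by linarith) (by linarith) hx₂H hcond1 hcond2
  rw [sub_sub_cancel] at key
  rw [mazyaField_dot_eq_mazyaFlux_div, div_mul_div_comm, le_div_iff₀ (mul_pos hε hr)]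
  linarith

/-- Lemma 4.3 of the paper (pointwise algebraic statement). `n = (n₁, n₂)` is the outward
unit normal at a point `x = (x₁, x₂)` of the submerged contour `S`, `W` is Maz'ya's field. -/
theorem mazya_field_lower_bound
    (x₁ x₂ n₁ n₂ ε h H : ℝ)
    (hh : 0 < h) (hhH : h ≤ H)
    (hx₂ : h < x₂) (hx₂H : x₂ ≤ H)
    (hε : 0 < ε) (hεh : ε ≤ h)
    (hn : n₁^2 + n₂^2 = 1)
    (hcond1 : x₁ * n₁ ≤ 0)
    (hcond2 : x₁ * (x₁^2 - (x₂ - ε)^2) * n₁ + 2 * x₁^2 * (x₂ - ε) * n₂ ≥ 0) :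
    -(x₁ * n₁) ≤ (H / ε) *
      ((x₁ * (x₁^2 - x₂^2) / (x₁^2 + x₂^2)) * n₁ + (2 * x₁^2 * x₂ / (x₁^2 + x₂^2)) * n₂) :=
  mazya_field_lower_bound_general x₁ x₂ n₁ n₂ ε h H hx₂ hx₂H hε hεh hcond1 hcond2
end

section
/- Let ν > 0 and suppose Θ : [0,∞) → ℝ is in H¹(0,∞) with ∫₀^∞ Θ(t)·e^{−νt} dt = 0. Then (1/2)·∫₀^∞ Θ'(t)² dt ≥ ν·Θ(0)². -/
/-!
Integration by parts against `e^{-νt}` turns the orthogonality into `∫ Θ' e^{-νt} = -Θ(0)`; there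
is no boundary term at infinity because `Θ e^{-νt}` and its derivative `(Θ' - νΘ) e^{-νt}` are
integrable. Cauchy–Schwarz with `∫₀^∞ e^{-2νt} = 1/(2ν)` then gives `Θ(0)² ≤ ‖Θ'‖² / (2ν)`.
-/

open MeasureTheory Real Filter Set

section SquareIntegrable

variable {α : Type*} [MeasurableSpace α] {μ : Measure α} {f g : α → ℝ}

theorem Integrable.mul_of_integrable_sq (hf : AEStronglyMeasurable f μ)
    (hg : AEStronglyMeasurable g μ) (hf2 : Integrable (fun x => f x ^ 2) μ)
    (hg2 : Integrable (fun x => g x ^ 2) μ) : Integrable (fun x => f x * g x) μ :=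
  ((memLp_two_iff_integrable_sq hf).2 hf2).integrable_mul ((memLp_two_iff_integrable_sq hg).2 hg2)

theorem sq_integral_mul_le_integral_sq_mul_integral_sq (hf2 : Integrable (fun x => f x ^ 2) μ)
    (hg2 : Integrable (fun x => g x ^ 2) μ) (hfg : Integrable (fun x => f x * g x) μ) :
    (∫ x, f x * g x ∂μ) ^ 2 ≤ (∫ x, f x ^ 2 ∂μ) * ∫ x, g x ^ 2 ∂μ := by
  have hquad : ∀ t : ℝ, 0 ≤ (∫ x, f x ^ 2 ∂μ) * (t * t) + 2 * (∫ x, f x * g x ∂μ) * t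
      + ∫ x, g x ^ 2 ∂μ := by
    intro t
    have hexpand : ∀ x, (t * f x + g x) ^ 2
        = t ^ 2 * f x ^ 2 + 2 * t * (f x * g x) + g x ^ 2 := fun x => by ring
    calc 0 ≤ ∫ x, (t * f x + g x) ^ 2 ∂μ := integral_nonneg fun x => sq_nonneg _
      _ = _ := by
        simp_rw [hexpand]
        rw [integral_add (f := fun x => t ^ 2 * f x ^ 2 + 2 * t * (f x * g x))
            ((hf2.const_mul _).add (hfg.const_mul _)) hg2,
          integral_add (hf2.const_mul _) (hfg.const_mul _), integral_const_mul,
          integral_const_mul]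
        ring
  have hdiscrim := discrim_le_zero hquad
  rw [discrim] at hdiscrim
  linarith

end SquareIntegrable

theorem integral_Ioi_deriv_mul_eq_of_integrable {f f' w w' : ℝ → ℝ} {a : ℝ}
    (hf : ∀ x ∈ Ici a, HasDerivAt f (f' x) x) (hw : ∀ x ∈ Ici a, HasDerivAt w (w' x) x)
    (hfw : IntegrableOn (fun x => f x * w x) (Ioi a))
    (hf'w : IntegrableOn (fun x => f' x * w x) (Ioi a))
    (hfw' : IntegrableOn (fun x => f x * w' x) (Ioi a)) :
    ∫ x in Ioi a, f' x * w x = -(f a * w a) - ∫ x in Ioi a, f x * w' x := by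
  have hderiv : ∀ x ∈ Ici a, HasDerivAt (fun x => f x * w x) (f' x * w x + f x * w' x) x :=
    fun x hx => (hf x hx).mul (hw x hx)
  have hlim : Tendsto (fun x => f x * w x) atTop (nhds 0) :=
    tendsto_zero_of_hasDerivAt_of_integrableOn_Ioi (fun x hx => hderiv x (Ioi_subset_Ici_self hx))
      (hf'w.add hfw') hfw
  have hFTC := integral_Ioi_of_hasDerivAt_of_tendsto' hderiv (hf'w.add hfw') hlim
  rw [integral_add hf'w hfw'] at hFTC
  linarith

section ExpNegMul

variable {ν : ℝ}

theorem hasDerivAt_exp_neg_mul (t : ℝ) :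
    HasDerivAt (fun t => exp (-ν * t)) (-ν * exp (-ν * t)) t := by
  simpa [mul_comm] using ((hasDerivAt_id t).const_mul (-ν)).exp

theorem exp_neg_mul_sq (t : ℝ) : exp (-ν * t) ^ 2 = exp (-(2 * ν) * t) := by
  rw [← exp_nat_mul]
  ring_nf

theorem integrableOn_exp_neg_mul_sq_Ioi (hν : 0 < ν) :
    IntegrableOn (fun t => exp (-ν * t) ^ 2) (Ioi 0) := by
  simpa only [exp_neg_mul_sq] using exp_neg_integrableOn_Ioi 0 (by positivity : 0 < 2 * ν)

theorem integral_exp_neg_mul_sq_Ioi (hν : 0 < ν) :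
    ∫ t in Ioi (0:ℝ), exp (-ν * t) ^ 2 = 1 / (2 * ν) := by
  simp_rw [exp_neg_mul_sq]
  rw [integral_exp_mul_Ioi (by linarith) 0]
  field_simp
  simp

end ExpNegMul

theorem john_inequality_general
    (Θ Θ' : ℝ → ℝ) (ν : ℝ) (hν : 0 < ν)
    (hderiv : ∀ t ∈ Set.Ici (0:ℝ), HasDerivAt Θ (Θ' t) t)
    (hΘ'2 : IntegrableOn (fun t => (Θ' t)^2) (Set.Ioi (0:ℝ)) volume)
    (hint : IntegrableOn (fun t => Θ t * Real.exp (-ν * t)) (Set.Ioi (0:ℝ)) volume)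
    (horth : ∫ t in Set.Ioi (0:ℝ), Θ t * Real.exp (-ν * t) = 0) :
    (1/2) * ∫ t in Set.Ioi (0:ℝ), (Θ' t)^2 ≥ ν * (Θ 0)^2 := by
  have hΘ'_meas : AEStronglyMeasurable Θ' (volume.restrict (Ioi 0)) := by
    refine (measurable_deriv Θ).aestronglyMeasurable.congr ?_
    filter_upwards [ae_restrict_mem measurableSet_Ioi] with t ht
    exact (hderiv t (Ioi_subset_Ici_self ht)).deriv
  have hΘ'_exp_int : IntegrableOn (fun t => Θ' t * exp (-ν * t)) (Ioi 0) :=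
    Integrable.mul_of_integrable_sq hΘ'_meas (by fun_prop) hΘ'2
      (integrableOn_exp_neg_mul_sq_Ioi hν)
  have hibp : ∫ t in Ioi (0:ℝ), Θ' t * exp (-ν * t) = -Θ 0 := by
    have hΘ_exp'_int : IntegrableOn (fun t => Θ t * (-ν * exp (-ν * t))) (Ioi 0) := by
      simpa only [IntegrableOn, mul_left_comm] using hint.const_mul (-ν)
    rw [integral_Ioi_deriv_mul_eq_of_integrable hderiv (fun t _ => hasDerivAt_exp_neg_mul t)
      hint hΘ'_exp_int hΘ_exp'_int]
    simp_rw [mul_left_comm (Θ _) (-ν)]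
    rw [integral_const_mul, horth]
    simp
  have hcs := sq_integral_mul_le_integral_sq_mul_integral_sq hΘ'2
    (integrableOn_exp_neg_mul_sq_Ioi hν) hΘ'_exp_int
  rw [hibp, neg_sq, integral_exp_neg_mul_sq_Ioi hν] at hcs
  rw [ge_iff_le, ← le_div_iff₀' hν]
  exact hcs.trans_eq (by field_simp)

/-- F. John's inequality: if `Θ ∈ H¹(0,∞)` is orthogonal to `e^{-νt}` in `L²(0,∞)`,
then `(1/2)‖Θ'‖² ≥ ν Θ(0)²`. -/
theorem john_inequality
    (Θ Θ' : ℝ → ℝ) (ν : ℝ) (hν : 0 < ν)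
    (hderiv : ∀ t ∈ Set.Ici (0:ℝ), HasDerivAt Θ (Θ' t) t)
    (hΘ2 : IntegrableOn (fun t => (Θ t)^2) (Set.Ioi (0:ℝ)) volume)
    (hΘ'2 : IntegrableOn (fun t => (Θ' t)^2) (Set.Ioi (0:ℝ)) volume)
    (hint : IntegrableOn (fun t => Θ t * Real.exp (-ν * t)) (Set.Ioi (0:ℝ)) volume)
    (horth : ∫ t in Set.Ioi (0:ℝ), Θ t * Real.exp (-ν * t) = 0) :
    (1/2) * ∫ t in Set.Ioi (0:ℝ), (Θ' t)^2 ≥ ν * (Θ 0)^2 :=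
  john_inequality_general Θ Θ' ν hν hderiv hΘ'2 hint horth
end
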